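/- Consider the homogeneous pinning model (\omega_n \equiv 1) with hard-wall repulsion for the (p,q)-walk with 0 < p < 1. Then there exists \beta_0 > 0 such that F^+(\beta) = 0, and consequently f_c^+(\beta) = 0, for every \beta \in (0, \beta_0). -/

import Mathlib

open Filter Finset

noncomputable section
open scoped Classical

/-- The three possible increments of the `(p,q)`-walk: `-1, 0, +1`. -/
def step : Fin 3 → ℤ := ![-1, 0, 1]

/-- The probability weights of the three increments: `p/2, q = 1-p, p/2`. -/
def wt (p : ℝ) : Fin 3 → ℝ := ![p / 2, 1 - p, p / 2]

/-- Position of the walk after `n` steps, given the increments `ξ`. -/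
def pos {N : ℕ} (ξ : Fin N → Fin 3) (n : ℕ) : ℤ :=
  ∑ i : Fin N, if (i : ℕ) < n then step (ξ i) else 0

/-- Probability weight of the path with increments `ξ`. -/
def pwt (p : ℝ) {N : ℕ} (ξ : Fin N → Fin 3) : ℝ := ∏ i : Fin N, wt p (ξ i)

/-- The pinning partition function `Z_{N,ω}^{β,f}` of the `(p,q)`-walk with
charges `ω`, inverse temperature `β` and force `f`. -/
def Z (p : ℝ) (ω : ℕ → ℝ) (β f : ℝ) (N : ℕ) : ℝ :=
  ∑ ξ : Fin N → Fin 3,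
    pwt p ξ *
      Real.exp (β * ∑ n ∈ Finset.Icc 1 N, (if pos ξ n = 0 then ω n else 0)
        + β * f * ((pos ξ N : ℤ) : ℝ))

/-- `g(y) = log (p cosh y + q)`. -/
def g (p y : ℝ) : ℝ := Real.log (p * Real.cosh y + (1 - p))

/-- The hard-wall pinning partition function: expectation restricted to paths
with `S_n ≥ 0` for `n = 1, …, N`. -/
def Zplus (p : ℝ) (ω : ℕ → ℝ) (β f : ℝ) (N : ℕ) : ℝ :=
  ∑ ξ : Fin N → Fin 3,
    if ∀ n ∈ Finset.Icc 1 N, 0 ≤ pos ξ n then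
      pwt p ξ *
        Real.exp (β * ∑ n ∈ Finset.Icc 1 N, (if pos ξ n = 0 then ω n else 0)
          + β * f * ((pos ξ N : ℤ) : ℝ))
    else 0

/-!
Started at `0`, the walk stays nonnegative for `N` steps with probability at least `1/(2N)`:
`S_N ≥ 0` has probability at least `1/2` by the symmetry `S ↦ -S`, and when `S_N ≥ 0` the cyclic
rotation of the increments that starts the path at one of its minima stays nonnegative. As the
pinning reward is nonnegative, `Z⁺_N` is bounded below subexponentially.

Conversely, as long as `e^β (1 - p/2) ≤ 1`, the hard-wall partition function of a walk started at
height `x ≥ 0` is at most `1` if `x = 0` and at most `e^β` otherwise: a step landing at `0` earns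
`e^β`, which the bound `1` at `0` absorbs exactly, while at `0` the wall forbids the downward step
of probability `p/2`. Hence `Z⁺_N ≤ 1`, so `F⁺(β) = 0` for `β < -log (1 - p/2)`, and then
`f_c⁺(β) = g⁻¹(0)/β = 0`.
-/

lemma wt_nonneg {p : ℝ} (hp : 0 ≤ p) (hp1 : p ≤ 1) (i : Fin 3) : 0 ≤ wt p i := by
  fin_cases i <;> simp [wt] <;> linarith

lemma pwt_nonneg {p : ℝ} (hp : 0 ≤ p) (hp1 : p ≤ 1) {N : ℕ} (ξ : Fin N → Fin 3) :
    0 ≤ pwt p ξ :=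
  prod_nonneg fun _ _ => wt_nonneg hp hp1 _

lemma sum_wt (p : ℝ) : ∑ s : Fin 3, wt p s = 1 := by
  simp only [Fin.sum_univ_three, wt, Matrix.cons_val]
  ring

lemma sum_pwt (p : ℝ) (N : ℕ) : ∑ ξ : Fin N → Fin 3, pwt p ξ = 1 := by
  simp only [pwt]
  rw [← Fintype.prod_sum]
  simp [sum_wt]

lemma pwt_cons (p : ℝ) {N : ℕ} (s : Fin 3) (η : Fin N → Fin 3) :
    pwt p (Fin.cons s η) = wt p s * pwt p η :=
  Fin.prod_univ_succ _

def pathProb (p : ℝ) {N : ℕ} (E : (Fin N → Fin 3) → Prop) : ℝ :=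
  ∑ ξ : Fin N → Fin 3, if E ξ then pwt p ξ else 0

section pathProb

variable {p : ℝ} {N : ℕ}

lemma pathProb_true : pathProb p (fun _ : Fin N → Fin 3 => True) = 1 := by
  simp [pathProb, sum_pwt]

lemma pathProb_or_le (hp : 0 ≤ p) (hp1 : p ≤ 1) (E F : (Fin N → Fin 3) → Prop) :
    pathProb p (fun ξ => E ξ ∨ F ξ) ≤ pathProb p E + pathProb p F := by
  rw [pathProb, pathProb, pathProb, ← sum_add_distrib]
  refine sum_le_sum fun ξ _ => ?_
  have := pwt_nonneg hp hp1 ξ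
  split_ifs <;> simp_all

lemma pathProb_le_sum_of_forall_exists (hp : 0 ≤ p) (hp1 : p ≤ 1) {ι : Type*} [Fintype ι]
    {E : (Fin N → Fin 3) → Prop} {F : ι → (Fin N → Fin 3) → Prop}
    (h : ∀ ξ, E ξ → ∃ i, F i ξ) : pathProb p E ≤ ∑ i, pathProb p (F i) := by
  unfold pathProb
  rw [Finset.sum_comm]
  refine sum_le_sum fun ξ _ => ?_
  split_ifs with hE
  · obtain ⟨i, hi⟩ := h ξ hE
    calc pwt p ξ = if F i ξ then pwt p ξ else 0 := (if_pos hi).symm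
      _ ≤ ∑ j, if F j ξ then pwt p ξ else 0 :=
        single_le_sum (f := fun j => if F j ξ then pwt p ξ else 0)
          (fun j _ => by split_ifs <;> simp [pwt_nonneg hp hp1]) (mem_univ i)
  · exact sum_nonneg fun j _ => by split_ifs <;> simp [pwt_nonneg hp hp1]

lemma pathProb_comp_equiv (e : (Fin N → Fin 3) ≃ (Fin N → Fin 3))
    (he : ∀ ξ, pwt p (e ξ) = pwt p ξ) (E : (Fin N → Fin 3) → Prop) :
    pathProb p (E ∘ e) = pathProb p E := by
  rw [pathProb, pathProb, ← e.sum_comp (fun ξ => if E ξ then pwt p ξ else 0)]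
  exact sum_congr rfl fun ξ _ => by simp [he]

end pathProb

def reflect {N : ℕ} : (Fin N → Fin 3) ≃ (Fin N → Fin 3) := Equiv.piCongrRight fun _ => Fin.revPerm

lemma pwt_reflect (p : ℝ) {N : ℕ} (ξ : Fin N → Fin 3) : pwt p (reflect ξ) = pwt p ξ := by
  refine prod_congr rfl fun i _ => ?_
  simp only [reflect, Equiv.piCongrRight_apply, Pi.map_apply, Fin.revPerm_apply]
  generalize ξ i = s
  fin_cases s <;> rfl

lemma pos_reflect {N : ℕ} (ξ : Fin N → Fin 3) (n : ℕ) : pos (reflect ξ) n = -pos ξ n := by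
  rw [pos, pos, ← sum_neg_distrib]
  refine sum_congr rfl fun i _ => ?_
  simp only [reflect, Equiv.piCongrRight_apply, Pi.map_apply, Fin.revPerm_apply]
  generalize ξ i = s
  split_ifs <;> fin_cases s <;> rfl

lemma half_le_pathProb_pos_nonneg {p : ℝ} (hp : 0 ≤ p) (hp1 : p ≤ 1) (N : ℕ) :
    1 / 2 ≤ pathProb p (fun ξ : Fin N → Fin 3 => 0 ≤ pos ξ N) := by
  have hsymm : pathProb p (fun ξ : Fin N → Fin 3 => pos ξ N ≤ 0)
      = pathProb p (fun ξ : Fin N → Fin 3 => 0 ≤ pos ξ N) := by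
    rw [← pathProb_comp_equiv reflect (pwt_reflect p)]
    simp [Function.comp_def, pos_reflect]
  have := pathProb_or_le hp hp1 (fun ξ : Fin N → Fin 3 => 0 ≤ pos ξ N) (fun ξ => pos ξ N ≤ 0)
  simp only [le_total, pathProb_true, hsymm] at this
  linarith

section Rotation

variable {N : ℕ} [NeZero N]

def rot (c : Fin N) : (Fin N → Fin 3) ≃ (Fin N → Fin 3) where
  toFun ξ i := ξ (i + c)
  invFun ξ i := ξ (i - c)
  left_inv ξ := by funext i; simp
  right_inv ξ := by funext i; simp

lemma pwt_rot (p : ℝ) (c : Fin N) (ξ : Fin N → Fin 3) : pwt p (rot c ξ) = pwt p ξ :=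
  Fintype.prod_equiv (Equiv.addRight c) _ _ fun _ => rfl

def periodicStep (ξ : Fin N → Fin 3) (j : ℕ) : ℤ := step (ξ (Fin.ofNat N j))

def periodicPos (ξ : Fin N → Fin 3) (n : ℕ) : ℤ := ∑ j ∈ range n, periodicStep ξ j

lemma pos_eq_periodicPos (ξ : Fin N → Fin 3) {n : ℕ} (hn : n ≤ N) :
    pos ξ n = periodicPos ξ n := by
  calc pos ξ n = ∑ j ∈ range N, if j < n then periodicStep ξ j else 0 := by
        rw [← Fin.sum_univ_eq_sum_range (fun j => if j < n then periodicStep ξ j else 0)]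
        simp [pos, periodicStep]
    _ = periodicPos ξ n := by
        rw [← sum_filter, periodicPos]
        congr 1
        ext j
        simp only [mem_filter, mem_range]
        omega

lemma periodicPos_add (ξ : Fin N → Fin 3) (a n : ℕ) :
    periodicPos ξ (a + n) = periodicPos ξ a + ∑ j ∈ range n, periodicStep ξ (a + j) :=
  sum_range_add _ _ _

lemma periodicPos_rot (c : Fin N) (ξ : Fin N → Fin 3) (n : ℕ) :
    periodicPos (rot c ξ) n = periodicPos ξ (c + n) - periodicPos ξ c := by
  rw [periodicPos_add, add_sub_cancel_left, periodicPos]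
  refine sum_congr rfl fun j _ => ?_
  have : Fin.ofNat N j + c = Fin.ofNat N (c + j) := by ext; simp [Fin.val_add, add_comm]
  simp only [periodicStep, rot, Equiv.coe_fn_mk, this]

lemma periodicPos_period_mul_add (ξ : Fin N → Fin 3) (q r : ℕ) :
    periodicPos ξ (N * q + r) = q * periodicPos ξ N + periodicPos ξ r := by
  induction q with
  | zero => simp
  | succ q ih =>
    rw [show N * (q + 1) + r = N + (N * q + r) by ring, periodicPos_add]
    have hper : ∀ j, periodicStep ξ (N + j) = periodicStep ξ j := fun j => by
      simp only [periodicStep]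
      congr 2
      ext
      simp
    simp only [hper]
    rw [← periodicPos, ih]
    push_cast
    ring

/-- The cycle lemma: if the path ends above its start, rotating it to start at a time where
it is minimal keeps it nonnegative. -/
lemma exists_rot_nonneg (ξ : Fin N → Fin 3) (hN : 0 ≤ pos ξ N) :
    ∃ c : Fin N, ∀ n ∈ Icc 1 N, 0 ≤ pos (rot c ξ) n := by
  obtain ⟨m, hm, hmin⟩ := exists_min_image (range N) (periodicPos ξ)
    (nonempty_range_iff.2 (NeZero.ne N))
  have hmN : m < N := mem_range.1 hm
  have hmin_all : ∀ k, periodicPos ξ m ≤ periodicPos ξ k := by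
    intro k
    rw [← Nat.div_add_mod k N, periodicPos_period_mul_add, ← pos_eq_periodicPos ξ le_rfl]
    have := hmin (k % N) (mem_range.2 (Nat.mod_lt k (NeZero.pos N)))
    nlinarith [Int.natCast_nonneg (k / N)]
  refine ⟨⟨m, hmN⟩, fun n hn => ?_⟩
  rw [pos_eq_periodicPos _ (mem_Icc.1 hn).2, periodicPos_rot]
  exact sub_nonneg.2 (hmin_all _)

end Rotation

lemma pathProb_pos_nonneg_le {p : ℝ} (hp : 0 ≤ p) (hp1 : p ≤ 1) (N : ℕ) [NeZero N] :
    pathProb p (fun ξ : Fin N → Fin 3 => 0 ≤ pos ξ N)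
      ≤ N * pathProb p (fun ξ : Fin N → Fin 3 => ∀ n ∈ Icc 1 N, 0 ≤ pos ξ n) := by
  calc _ ≤ ∑ c : Fin N, pathProb p ((fun ξ => ∀ n ∈ Icc 1 N, 0 ≤ pos ξ n) ∘ rot c) :=
        pathProb_le_sum_of_forall_exists hp hp1 fun ξ h => exists_rot_nonneg ξ h
    _ = _ := by simp [pathProb_comp_equiv _ (pwt_rot p _)]

lemma pathProb_le_Zplus {p : ℝ} (hp : 0 ≤ p) (hp1 : p ≤ 1) {ω : ℕ → ℝ} (hω : ∀ n, 0 ≤ ω n)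
    {β f : ℝ} (hβ : 0 ≤ β) (hf : 0 ≤ f) (N : ℕ) :
    pathProb p (fun ξ : Fin N → Fin 3 => ∀ n ∈ Icc 1 N, 0 ≤ pos ξ n) ≤ Zplus p ω β f N := by
  refine sum_le_sum fun ξ _ => ?_
  split_ifs with h
  · refine le_mul_of_one_le_right (pwt_nonneg hp hp1 ξ) (Real.one_le_exp ?_)
    have hSN : (0 : ℝ) ≤ pos ξ N := by
      rcases N.eq_zero_or_pos with rfl | hN
      · simp [pos]
      · exact_mod_cast h N (mem_Icc.2 ⟨hN, le_rfl⟩)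
    have hpin : 0 ≤ ∑ n ∈ Icc 1 N, if pos ξ n = 0 then ω n else 0 :=
      sum_nonneg fun n _ => by split_ifs <;> simp [hω]
    positivity
  · exact le_rfl

lemma half_div_le_Zplus {p : ℝ} (hp : 0 ≤ p) (hp1 : p ≤ 1) {β : ℝ} (hβ : 0 ≤ β)
    {N : ℕ} (hN : 0 < N) : 1 / 2 / N ≤ Zplus p (fun _ => 1) β 0 N := by
  have : NeZero N := ⟨hN.ne'⟩
  have hN' : (0 : ℝ) < N := by exact_mod_cast hN
  rw [div_le_iff₀' hN']
  calc 1 / 2 ≤ pathProb p (fun ξ : Fin N → Fin 3 => 0 ≤ pos ξ N) :=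
        half_le_pathProb_pos_nonneg hp hp1 N
    _ ≤ _ := pathProb_pos_nonneg_le hp hp1 N
    _ ≤ _ := by
        gcongr
        exact pathProb_le_Zplus hp hp1 (fun _ => zero_le_one) hβ le_rfl N

/-- The weight in `Zplus p (fun _ => 1) β 0` of a path started at height `x` instead of `0`. -/
def hardWallWeight (p β : ℝ) (x : ℤ) {N : ℕ} (ξ : Fin N → Fin 3) : ℝ :=
  if ∀ k ∈ range N, 0 ≤ x + pos ξ (k + 1) then
    pwt p ξ * Real.exp (β * ∑ k ∈ range N, if x + pos ξ (k + 1) = 0 then 1 else 0)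
  else 0

def ZplusFrom (p β : ℝ) (x : ℤ) (N : ℕ) : ℝ := ∑ ξ : Fin N → Fin 3, hardWallWeight p β x ξ

lemma Zplus_eq_ZplusFrom (p β : ℝ) (N : ℕ) : Zplus p (fun _ => 1) β 0 N = ZplusFrom p β 0 N := by
  have hIcc : Icc 1 N = (range N).map (addRightEmbedding 1) := by
    ext n
    simp only [mem_Icc, Finset.mem_map, mem_range, addRightEmbedding_apply]
    constructor
    · intro h
      exact ⟨n - 1, by omega, by omega⟩
    · rintro ⟨k, hk, rfl⟩
      omega
  simp only [Zplus, ZplusFrom, hardWallWeight, hIcc, sum_map, forall_mem_map,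
    addRightEmbedding_apply, zero_add, mul_zero, zero_mul, add_zero]

lemma pos_cons {N : ℕ} (s : Fin 3) (η : Fin N → Fin 3) (n : ℕ) :
    pos (Fin.cons s η) (n + 1) = step s + pos η n := by
  simp [pos, Fin.sum_univ_succ]

lemma hardWallWeight_cons (p β : ℝ) (x : ℤ) {N : ℕ} (s : Fin 3) (η : Fin N → Fin 3) :
    hardWallWeight p β x (Fin.cons s η)
      = (if 0 ≤ x + step s then wt p s * Real.exp (β * if x + step s = 0 then 1 else 0) else 0)
        * hardWallWeight p β (x + step s) η := by
  have hpos : ∀ k, x + pos (Fin.cons s η) (k + 1 + 1) = x + step s + pos η (k + 1) := by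
    simp [pos_cons, add_assoc]
  have hpos0 : x + pos (Fin.cons s η) (0 + 1) = x + step s := by simp [pos]
  simp only [hardWallWeight, mem_range, Nat.forall_lt_succ_left', sum_range_succ', hpos, hpos0,
    pwt_cons]
  by_cases h0 : 0 ≤ x + step s
  · by_cases hη : ∀ k < N, 0 ≤ x + step s + pos η (k + 1)
    · rw [if_pos ⟨h0, hη⟩, if_pos h0, if_pos hη, mul_add, Real.exp_add]
      ring
    · rw [if_neg fun h => hη h.2, if_neg hη, mul_zero]
  · rw [if_neg fun h => h0 h.1, if_neg h0, zero_mul]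

lemma ZplusFrom_zero (p β : ℝ) (x : ℤ) : ZplusFrom p β x 0 = 1 := by
  simp [ZplusFrom, hardWallWeight, pwt]

lemma ZplusFrom_succ (p β : ℝ) (x : ℤ) (N : ℕ) :
    ZplusFrom p β x (N + 1) = ∑ s : Fin 3,
      (if 0 ≤ x + step s then wt p s * Real.exp (β * if x + step s = 0 then 1 else 0) else 0)
        * ZplusFrom p β (x + step s) N := by
  rw [ZplusFrom, ← (Fin.consEquiv fun _ => Fin 3).sum_comp, Fintype.sum_prod_type]
  simp [Fin.consEquiv, hardWallWeight_cons, ZplusFrom, mul_sum]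

lemma ZplusFrom_succ_le {p β : ℝ} (hp : 0 ≤ p) (hp1 : p ≤ 1) (x : ℤ) {N : ℕ}
    (ih : ∀ y, 0 ≤ y → ZplusFrom p β y N ≤ if y = 0 then 1 else Real.exp β) :
    ZplusFrom p β x (N + 1) ≤ Real.exp β * ∑ s : Fin 3, if 0 ≤ x + step s then wt p s else 0 := by
  rw [ZplusFrom_succ, mul_sum]
  refine sum_le_sum fun s _ => ?_
  by_cases h : 0 ≤ x + step s
  · rw [if_pos h, if_pos h]
    -- the pinning reward for landing at `0` is exactly what the bound saves there
    have hreward : ∀ y : ℤ, Real.exp (β * if y = 0 then 1 else 0)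
        * (if y = 0 then 1 else Real.exp β) = Real.exp β := fun y => by split_ifs <;> simp
    calc wt p s * Real.exp (β * if x + step s = 0 then 1 else 0) * ZplusFrom p β (x + step s) N
        ≤ wt p s * Real.exp (β * if x + step s = 0 then 1 else 0)
          * (if x + step s = 0 then 1 else Real.exp β) := by
          have := wt_nonneg hp hp1 s
          gcongr
          exact ih _ h
      _ = Real.exp β * wt p s := by rw [mul_assoc, hreward, mul_comm]
  · simp [h]

lemma ZplusFrom_le {p β : ℝ} (hp : 0 ≤ p) (hp1 : p ≤ 1) (hβ : 0 ≤ β)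
    (hsub : Real.exp β * (1 - p / 2) ≤ 1) (N : ℕ) :
    ∀ x, 0 ≤ x → ZplusFrom p β x N ≤ if x = 0 then 1 else Real.exp β := by
  induction N with
  | zero =>
    intro x _
    rw [ZplusFrom_zero]
    split_ifs
    exacts [le_rfl, Real.one_le_exp hβ]
  | succ N ih =>
    intro x hx
    refine (ZplusFrom_succ_le hp hp1 x ih).trans ?_
    rcases hx.eq_or_lt with rfl | hx
    · have hsum : (∑ s : Fin 3, if 0 ≤ (0 : ℤ) + step s then wt p s else 0) = 1 - p / 2 := by
        simp [Fin.sum_univ_three, step, wt]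
        ring
      rw [hsum, if_pos rfl]
      exact hsub
    · have hall : ∀ s, 0 ≤ x + step s := fun s => by fin_cases s <;> simp [step] <;> omega
      simp only [hall, if_true, sum_wt, mul_one, if_neg hx.ne', le_refl]

lemma Zplus_le_one {p β : ℝ} (hp : 0 ≤ p) (hp1 : p ≤ 1) (hβ : 0 ≤ β)
    (hsub : Real.exp β * (1 - p / 2) ≤ 1) (N : ℕ) : Zplus p (fun _ => 1) β 0 N ≤ 1 := by
  simpa [Zplus_eq_ZplusFrom] using ZplusFrom_le hp hp1 hβ hsub N 0 le_rfl

lemma tendsto_log_div_zero_of_div_le_of_le_one {z : ℕ → ℝ} {c : ℝ} (hc : 0 < c)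
    (hlow : ∀ N, 0 < N → c / N ≤ z N) (hup : ∀ N, z N ≤ 1) :
    Tendsto (fun N : ℕ => Real.log (z N) / N) atTop (nhds 0) := by
  have hlog : Tendsto (fun N : ℕ => (Real.log c - Real.log N) / N) atTop (nhds 0) := by
    have h1 := Real.isLittleO_log_id_atTop.tendsto_div_nhds_zero.comp tendsto_natCast_atTop_atTop
    have h2 := tendsto_const_div_atTop_nhds_zero_nat (Real.log c)
    simpa [sub_div] using h2.sub h1
  refine tendsto_of_tendsto_of_tendsto_of_le_of_le' hlog tendsto_const_nhds ?_ ?_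
  all_goals
    filter_upwards [eventually_gt_atTop 0] with N hN
    have hN' : (0 : ℝ) < N := by exact_mod_cast hN
    have hzpos : 0 < z N := (div_pos hc hN').trans_le (hlow N hN)
  · rw [← Real.log_div hc.ne' hN'.ne']
    gcongr
    exact hlow N hN
  · exact div_nonpos_of_nonpos_of_nonneg (Real.log_nonpos hzpos.le (hup N)) hN'.le

lemma g_zero (p : ℝ) : g p 0 = 0 := by simp [g]

theorem stmt_8_general (p : ℝ) (hp : 0 < p) (hp1 : p < 1)
    (Fp : ℝ → ℝ)
    (hFp : ∀ β : ℝ, 0 ≤ β →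
      Tendsto (fun N : ℕ => Real.log (Zplus p (fun _ => 1) β 0 N) / N) atTop (nhds (Fp β)))
    (ginv : ℝ → ℝ)
    (hginv_left : ∀ y : ℝ, 0 ≤ y → ginv (g p y) = y) :
    ∃ β₀ : ℝ, 0 < β₀ ∧ ∀ β : ℝ, 0 < β → β < β₀ → Fp β = 0 ∧ ginv (Fp β) / β = 0 := by
  have hq : 0 < 1 - p / 2 := by linarith
  refine ⟨-Real.log (1 - p / 2), neg_pos.2 (Real.log_neg hq (by linarith)), fun β hβ hβ₀ => ?_⟩
  have hsub : Real.exp β * (1 - p / 2) ≤ 1 :=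
    calc Real.exp β * (1 - p / 2) ≤ Real.exp (-Real.log (1 - p / 2)) * (1 - p / 2) := by gcongr
      _ = 1 := by rw [Real.exp_neg, Real.exp_log hq, inv_mul_cancel₀ hq.ne']
  have hF : Fp β = 0 :=
    tendsto_nhds_unique (hFp β hβ.le) <| tendsto_log_div_zero_of_div_le_of_le_one one_half_pos
      (fun _ hN => half_div_le_Zplus hp.le hp1.le hβ.le hN) (Zplus_le_one hp.le hp1.le hβ.le hsub)
  have hginv : ginv 0 = 0 := by simpa [g_zero] using hginv_left 0 le_rfl
  exact ⟨hF, by rw [hF, hginv, zero_div]⟩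

/-- for the homogeneous model with hard-wall repulsion and `0 < p < 1`,
there is `β₀ > 0` with `F⁺(β) = 0`, hence `f_c⁺(β) = 0`, for all `0 < β < β₀`. -/
theorem stmt_8 (p : ℝ) (hp : 0 < p) (hp1 : p < 1)
    (Fp : ℝ → ℝ)
    (hFp : ∀ β : ℝ, 0 ≤ β →
      Tendsto (fun N : ℕ => Real.log (Zplus p (fun _ => 1) β 0 N) / N) atTop (nhds (Fp β)))
    (ginv : ℝ → ℝ)
    (hginv_left : ∀ y : ℝ, 0 ≤ y → ginv (g p y) = y)
    (hginv_right : ∀ x : ℝ, 0 ≤ x → g p (ginv x) = x)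
    (hginv_nonneg : ∀ x : ℝ, 0 ≤ x → 0 ≤ ginv x) :
    ∃ β₀ : ℝ, 0 < β₀ ∧ ∀ β : ℝ, 0 < β → β < β₀ → Fp β = 0 ∧ ginv (Fp β) / β = 0 :=
  stmt_8_general p hp hp1 Fp hFp ginv hginv_left
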